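/- arXiv:2502.15166 — 3 statements merged into one kernel-verified Lean document; each statement's English description precedes it below -/
import Mathlib

section
/- Let P_1, ..., P_n be ranked posets each with a unique minimal element. Then the disjoint union of the posets underline(P_i) (each P_i with its least element removed) is Macaulay if and only if the wedge product of the P_i is Macaulay. -/
open Finset

instance {α : Type*} [Fintype α] : Fintype (WithBot α) := inferInstanceAs (Fintype (Option α))
instance {α : Type*} [Fintype α] : Fintype (WithTop α) := inferInstanceAs (Fintype (Option α))

variable {α : Type*}

open Classical in
noncomputable def shadow [PartialOrder α] [Fintype α] (A : Finset α) : Finset α :=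
  Finset.univ.filter (fun b => ∃ a ∈ A, a ⋖ b)

def IsRankFn [PartialOrder α] (rank : α → ℕ) : Prop :=
  (∃ x, rank x = 0 ∧ ∀ y, x ≤ y) ∧ ∀ a b : α, a ⋖ b → rank b = rank a + 1

def IsInitSeg [PartialOrder α] (rank : α → ℕ) (lt : α → α → Prop) (d : ℕ)
    (S : Finset α) : Prop :=
  (∀ x ∈ S, rank x = d) ∧ ∀ a ∈ S, ∀ b, rank b = d → lt a b → b ∈ S

def MacaulayWith [PartialOrder α] [Fintype α] (rank : α → ℕ)
    (lt : α → α → Prop) : Prop :=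
  IsTrichotomous α lt ∧ IsTrans α lt ∧ IsIrrefl α lt ∧
  (∀ d (A S : Finset α), (∀ x ∈ A, rank x = d) → IsInitSeg rank lt d S →
    S.card = A.card → (shadow S).card ≤ (shadow A).card) ∧
  (∀ d (S : Finset α), IsInitSeg rank lt d S → IsInitSeg rank lt (d + 1) (shadow S))

def IsMacaulay [PartialOrder α] [Fintype α] (rank : α → ℕ) : Prop :=
  ∃ lt : α → α → Prop, MacaulayWith rank lt

abbrev Wedge (P Q : Type*) [PartialOrder P] [PartialOrder Q] [OrderBot P] [OrderBot Q] :=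
  WithBot ({p : P // p ≠ ⊥} ⊕ {q : Q // q ≠ ⊥})

def wedgeRank {P Q : Type*} [PartialOrder P] [PartialOrder Q] [OrderBot P] [OrderBot Q]
    (rP : P → ℕ) (rQ : Q → ℕ) : Wedge P Q → ℕ :=
  WithBot.recBotCoe 0 (Sum.elim (fun p => rP p.1) (fun q => rQ q.1))

open Classical in
noncomputable def wedgeInl {P Q : Type*} [PartialOrder P] [PartialOrder Q] [OrderBot P]
    [OrderBot Q] (p : P) : Wedge P Q :=
  if h : p = ⊥ then ⊥ else
    ((Sum.inl ⟨p, h⟩ : {p : P // p ≠ ⊥} ⊕ {q : Q // q ≠ ⊥}) : Wedge P Q)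

open Classical in
noncomputable def wedgeInr {P Q : Type*} [PartialOrder P] [PartialOrder Q] [OrderBot P]
    [OrderBot Q] (q : Q) : Wedge P Q :=
  if h : q = ⊥ then ⊥ else
    ((Sum.inr ⟨q, h⟩ : {p : P // p ≠ ⊥} ⊕ {q : Q // q ≠ ⊥}) : Wedge P Q)

abbrev Diamond (P Q : Type*) [PartialOrder P] [PartialOrder Q] [OrderBot P] [OrderBot Q]
    [OrderTop P] [OrderTop Q] :=
  WithBot (WithTop ({p : P // p ≠ ⊥ ∧ p ≠ ⊤} ⊕ {q : Q // q ≠ ⊥ ∧ q ≠ ⊤}))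

def diamondRank {P Q : Type*} [PartialOrder P] [PartialOrder Q] [OrderBot P] [OrderBot Q]
    [OrderTop P] [OrderTop Q] (rP : P → ℕ) (rQ : Q → ℕ) (s : ℕ) : Diamond P Q → ℕ :=
  WithBot.recBotCoe 0 (WithTop.recTopCoe s (Sum.elim (fun p => rP p.1) (fun q => rQ q.1)))

def diamondInl {P Q : Type*} [PartialOrder P] [PartialOrder Q] [OrderBot P] [OrderBot Q]
    [OrderTop P] [OrderTop Q] (p : {p : P // p ≠ ⊥ ∧ p ≠ ⊤}) : Diamond P Q :=
  (((Sum.inl p : {p : P // p ≠ ⊥ ∧ p ≠ ⊤} ⊕ {q : Q // q ≠ ⊥ ∧ q ≠ ⊤}) :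
    WithTop ({p : P // p ≠ ⊥ ∧ p ≠ ⊤} ⊕ {q : Q // q ≠ ⊥ ∧ q ≠ ⊤})) : Diamond P Q)

abbrev Box (a b : ℕ) := Fin a × Fin b

def boxRank {a b : ℕ} : Box a b → ℕ := fun p => p.1.val + p.2.val

abbrev BoxF {n : ℕ} (d : Fin n → ℕ) := ∀ i, Fin (d i + 1)

def boxFRank {n : ℕ} {d : Fin n → ℕ} : BoxF d → ℕ := fun x => ∑ i, (x i).val

def diamondInr {P Q : Type*} [PartialOrder P] [PartialOrder Q] [OrderBot P] [OrderBot Q]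
    [OrderTop P] [OrderTop Q] (q : {q : Q // q ≠ ⊥ ∧ q ≠ ⊤}) : Diamond P Q :=
  (((Sum.inr q : {p : P // p ≠ ⊥ ∧ p ≠ ⊤} ⊕ {q : Q // q ≠ ⊥ ∧ q ≠ ⊤}) :
    WithTop ({p : P // p ≠ ⊥ ∧ p ≠ ⊤} ⊕ {q : Q // q ≠ ⊥ ∧ q ≠ ⊤})) : Diamond P Q)

abbrev WedgeFam {ι : Type*} (P : ι → Type*) [∀ i, PartialOrder (P i)]
    [∀ i, OrderBot (P i)] :=
  WithBot (Σ i, {p : P i // p ≠ ⊥})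

def wedgeFamRank {ι : Type*} {P : ι → Type*} [∀ i, PartialOrder (P i)]
    [∀ i, OrderBot (P i)] (rank : ∀ i, P i → ℕ) : WedgeFam P → ℕ :=
  WithBot.recBotCoe 0 (fun s => rank s.1 s.2.1)

abbrev DiamondFam {ι : Type*} (P : ι → Type*) [∀ i, PartialOrder (P i)]
    [∀ i, OrderBot (P i)] [∀ i, OrderTop (P i)] :=
  WithBot (WithTop (Σ i, {p : P i // p ≠ ⊥ ∧ p ≠ ⊤}))

def diamondFamRank {ι : Type*} {P : ι → Type*} [∀ i, PartialOrder (P i)]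
    [∀ i, OrderBot (P i)] [∀ i, OrderTop (P i)] (rank : ∀ i, P i → ℕ) (s : ℕ) :
    DiamondFam P → ℕ :=
  WithBot.recBotCoe 0 (WithTop.recTopCoe s (fun x => rank x.1 x.2.1))

/-!
The wedge product is `WithBot Q`, where `Q` is the disjoint union of the punctured posets, with
every rank shifted up by one. Adjoining a bottom changes nothing above level `0`: covers, shadows
and initial segments of `Q` at level `d` are exactly those of `WithBot Q` at level `d + 1`, for the
order on `WithBot Q` that puts `⊥` first. Level `0` of `WithBot Q` is `{⊥}`, whose shadow is the set
of minimal elements of `Q`, i.e. all of level `1`, so it imposes no further condition.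
-/

section Shadow

variable {γ : Type*} [PartialOrder γ] [Fintype γ]

lemma mem_shadow {A : Finset γ} {b : γ} : b ∈ _root_.shadow A ↔ ∃ a ∈ A, a ⋖ b := by
  simp [_root_.shadow]

lemma shadow_image_coe [DecidableEq γ] (T : Finset γ) :
    _root_.shadow (T.image ((↑) : γ → WithBot γ)) = (_root_.shadow T).image (↑) := by
  ext b
  cases b with
  | bot => simp [mem_shadow]
  | coe b => simp [mem_shadow]

end Shadow

namespace Option

variable {γ : Type*} {lt : γ → γ → Prop}

theorem lt_trichotomous [Std.Trichotomous lt] : Std.Trichotomous (Option.lt lt) :=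
  ⟨by
    rintro (_ | a) (_ | b) hab hba
    exacts [rfl, absurd trivial hab, absurd trivial hba,
      congrArg some (Std.Trichotomous.trichotomous a b hab hba)]⟩

theorem lt_isTrans [IsTrans γ lt] : IsTrans (Option γ) (Option.lt lt) :=
  ⟨by
    rintro (_ | a) (_ | b) (_ | c) hab hbc <;> first | trivial | exact _root_.trans_of lt hab hbc⟩

theorem lt_irrefl [Std.Irrefl lt] : Std.Irrefl (Option.lt lt) :=
  ⟨by rintro (_ | a) h; exacts [h, Std.Irrefl.irrefl a h]⟩

end Option

section WithBotRank

variable {γ : Type*} {ρ : γ → ℕ}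

def withBotRank (ρ : γ → ℕ) : WithBot γ → ℕ :=
  WithBot.recBotCoe 0 (ρ · + 1)

@[simp] lemma withBotRank_bot : withBotRank ρ ⊥ = 0 := rfl

@[simp] lemma withBotRank_coe (a : γ) : withBotRank ρ a = ρ a + 1 := rfl

lemma subset_singleton_bot_of_withBotRank_eq_zero {T : Finset (WithBot γ)}
    (hT : ∀ x ∈ T, withBotRank ρ x = 0) : T ⊆ {⊥} := by
  intro x hx
  cases x with
  | bot => exact Finset.mem_singleton_self ⊥
  | coe a => simpa using hT a hx

lemma exists_image_coe_eq_of_withBotRank_eq_succ [DecidableEq γ] {d : ℕ}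
    {T : Finset (WithBot γ)} (hT : ∀ x ∈ T, withBotRank ρ x = d + 1) :
    ∃ S : Finset γ, S.image (↑) = T := by
  classical
  refine ⟨T.preimage (↑) WithBot.coe_injective.injOn, ?_⟩
  rw [Finset.image_preimage, Finset.filter_true_of_mem]
  intro x hx
  cases x with
  | bot => simpa using hT ⊥ hx
  | coe a => exact ⟨a, rfl⟩

variable [PartialOrder γ]

lemma isInitSeg_image_coe_iff [DecidableEq γ] {lt : WithBot γ → WithBot γ → Prop} {d : ℕ}
    {S : Finset γ} :
    IsInitSeg (withBotRank ρ) lt (d + 1) (S.image (↑)) ↔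
      IsInitSeg ρ (InvImage lt WithBot.some) d S := by
  simp [IsInitSeg, WithBot.forall, InvImage]

variable [Fintype γ]

lemma mem_shadow_singleton_bot (hmin : ∀ a, IsMin a ↔ ρ a = 0) {x : WithBot γ} :
    x ∈ _root_.shadow {⊥} ↔ withBotRank ρ x = 1 := by
  cases x with
  | bot => simp [mem_shadow]
  | coe a => simp only [mem_shadow, Finset.mem_singleton, exists_eq_left, WithBot.bot_covBy_coe,
      hmin, withBotRank_coe, Nat.add_eq_right]

theorem MacaulayWith.withBot {lt : γ → γ → Prop} (hmin : ∀ a, IsMin a ↔ ρ a = 0)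
    (h : MacaulayWith ρ lt) : MacaulayWith (withBotRank ρ) (Option.lt lt) := by
  classical
  obtain ⟨htri, htrans, hirr, hcard, hinit⟩ := h
  refine ⟨Option.lt_trichotomous, Option.lt_isTrans, Option.lt_irrefl, ?_, ?_⟩
  · rintro (_ | d) A S hA hS hSA
    · have hA := subset_singleton_bot_of_withBotRank_eq_zero hA
      have hS := subset_singleton_bot_of_withBotRank_eq_zero hS.1
      rcases Finset.subset_singleton_iff.1 hA with rfl | rfl <;>
        rcases Finset.subset_singleton_iff.1 hS with rfl | rfl <;> simp_all
    · obtain ⟨A, rfl⟩ := exists_image_coe_eq_of_withBotRank_eq_succ hA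
      obtain ⟨S, rfl⟩ := exists_image_coe_eq_of_withBotRank_eq_succ hS.1
      simp only [shadow_image_coe, card_image_of_injective _ WithBot.coe_injective] at hSA ⊢
      exact hcard d A S (by simpa using hA) (isInitSeg_image_coe_iff.1 hS) hSA
  · rintro (_ | d) S hS
    · rcases Finset.subset_singleton_iff.1 (subset_singleton_bot_of_withBotRank_eq_zero hS.1)
        with rfl | rfl
      · simp [IsInitSeg, mem_shadow]
      · exact ⟨fun x hx => (mem_shadow_singleton_bot hmin).1 hx,
          fun _ _ b hb _ => (mem_shadow_singleton_bot hmin).2 hb⟩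
    · obtain ⟨S, rfl⟩ := exists_image_coe_eq_of_withBotRank_eq_succ hS.1
      rw [shadow_image_coe]
      exact isInitSeg_image_coe_iff.2 (hinit d S (isInitSeg_image_coe_iff.1 hS))

theorem MacaulayWith.of_withBot {lt : WithBot γ → WithBot γ → Prop}
    (h : MacaulayWith (withBotRank ρ) lt) : MacaulayWith ρ (InvImage lt WithBot.some) := by
  classical
  obtain ⟨htri, htrans, hirr, hcard, hinit⟩ := h
  refine ⟨InvImage.trichotomous WithBot.coe_injective, inferInstance, inferInstance, ?_, ?_⟩
  · intro d A S hA hS hSA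
    have := hcard (d + 1) (A.image (↑)) (S.image (↑)) (by simpa using hA)
      (isInitSeg_image_coe_iff.2 hS) (by simpa [card_image_of_injective _ WithBot.coe_injective])
    simpa only [shadow_image_coe, card_image_of_injective _ WithBot.coe_injective] using this
  · intro d S hS
    have := hinit (d + 1) _ (isInitSeg_image_coe_iff.2 hS)
    rwa [shadow_image_coe, isInitSeg_image_coe_iff] at this

theorem isMacaulay_withBotRank_iff (hmin : ∀ a, IsMin a ↔ ρ a = 0) :
    IsMacaulay (withBotRank ρ) ↔ IsMacaulay ρ :=
  ⟨fun ⟨_, h⟩ => ⟨_, h.of_withBot⟩, fun ⟨_, h⟩ => ⟨_, h.withBot hmin⟩⟩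

end WithBotRank

theorem Sigma.isMin_mk_iff {ι : Type*} {α : ι → Type*} [∀ i, Preorder (α i)] {i : ι}
    {a : α i} : IsMin (⟨i, a⟩ : Σ i, α i) ↔ IsMin a := by
  refine ⟨fun h b hb => Sigma.mk_le_mk_iff.1 (h (Sigma.mk_le_mk_iff.2 hb)), ?_⟩
  rintro h ⟨j, b⟩ hb
  cases hb with
  | fiber _ _ _ hba => exact Sigma.mk_le_mk_iff.2 (h hba)

section RankFn

variable {P : Type*} [PartialOrder P] {rank : P → ℕ}

theorem IsRankFn.strictMono [Fintype P] (h : IsRankFn rank) : StrictMono rank := by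
  classical
  let := Fintype.toLocallyFiniteOrder (α := P)
  exact (strictMono_iff_forall_covBy rank).2 fun a b hab => by rw [h.2 a b hab]; omega

variable [OrderBot P]

theorem isMin_subtype_ne_bot_iff {p : {p : P // p ≠ ⊥}} : IsMin p ↔ ⊥ ⋖ (p : P) := by
  rw [isMin_iff_forall_not_lt]
  exact ⟨fun h => ⟨bot_lt_iff_ne_bot.2 p.2, fun c hc hcp => h ⟨c, hc.ne'⟩ hcp⟩,
    fun h q hq => h.2 (bot_lt_iff_ne_bot.2 q.2) hq⟩

theorem IsRankFn.rank_bot (h : IsRankFn rank) : rank ⊥ = 0 := by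
  obtain ⟨⟨m, hm, hle⟩, -⟩ := h
  rwa [← le_bot_iff.1 (hle ⊥)]

theorem IsRankFn.pos_of_ne_bot [Fintype P] (h : IsRankFn rank) {p : P} (hp : p ≠ ⊥) :
    0 < rank p :=
  h.rank_bot ▸ h.strictMono (bot_lt_iff_ne_bot.2 hp)

theorem IsRankFn.bot_covBy_iff [Fintype P] (h : IsRankFn rank) {p : P} :
    ⊥ ⋖ p ↔ rank p = 1 := by
  refine ⟨fun hp => by rw [h.2 _ _ hp, h.rank_bot], fun hp => ?_⟩
  have hpb : p ≠ ⊥ := by rintro rfl; simp [h.rank_bot] at hp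
  refine ⟨bot_lt_iff_ne_bot.2 hpb, fun c hc hcp => ?_⟩
  have := h.strictMono hcp
  have := h.pos_of_ne_bot hc.ne'
  omega

end RankFn

/-- The disjoint union of the posets `P i` with their bottoms removed is Macaulay iff the
wedge product of the `P i` is Macaulay. -/
theorem stmt2 {n : ℕ} (P : Fin n → Type*) [∀ i, PartialOrder (P i)]
    [∀ i, OrderBot (P i)] [∀ i, Fintype (P i)] [∀ i, DecidableEq (P i)]
    (rank : ∀ i, P i → ℕ) (hr : ∀ i, IsRankFn (rank i)) :
    IsMacaulay (fun x : Σ i, {p : P i // p ≠ ⊥} => rank x.1 x.2.1 - 1) ↔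
    IsMacaulay (wedgeFamRank rank) := by
  have hpos (x : Σ i, {p : P i // p ≠ ⊥}) : 0 < rank x.1 x.2.1 := (hr x.1).pos_of_ne_bot x.2.2
  have hmin (x : Σ i, {p : P i // p ≠ ⊥}) : IsMin x ↔ rank x.1 x.2.1 - 1 = 0 := by
    obtain ⟨i, p⟩ := x
    rw [Sigma.isMin_mk_iff, isMin_subtype_ne_bot_iff, (hr i).bot_covBy_iff]
    have := hpos ⟨i, p⟩
    dsimp only at this ⊢
    omega
  have hrank : wedgeFamRank rank =
      withBotRank fun x : Σ i, {p : P i // p ≠ ⊥} => rank x.1 x.2.1 - 1 := by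
    funext x
    cases x using WithBot.recBotCoe with
    | bot => rfl
    | coe x => exact (Nat.sub_add_cancel (hpos x)).symm
  rw [hrank, isMacaulay_withBotRank_iff hmin]
end

section
/- Consider the heart-shaped poset M = {(i,j) in N^2 : (i < a0 and j < a1) or (i < b0 and j < b1)} with componentwise order, where b0 < a0, a1 < b1, a0 >= b1, a0 + a1 >= b0 + b1, and a1 + b0 > b1. Then M is Macaulay with respect to the lexicographic order with y > x (i.e., (i,j) < (i',j') in the total order iff i+j < i'+j' or (i+j = i'+j' and j < j')). -/
open Finset

variable {α : Type*}

/-- The heart-shaped poset: the monomial poset of K[x,y]/((x^a0,y^a1) ∩ (x^b0,y^b1)). -/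
abbrev Heart (a0 a1 b0 b1 : ℕ) :=
  {p : Fin (max a0 b0) × Fin (max a1 b1) //
    (p.1.val < a0 ∧ p.2.val < a1) ∨ (p.1.val < b0 ∧ p.2.val < b1)}

def heartRank {a0 a1 b0 b1 : ℕ} : Heart a0 a1 b0 b1 → ℕ := fun p => p.1.1.val + p.1.2.val

/-- The lexicographic order with y > x on the heart-shaped poset: compare by rank, then by
the exponent of y. -/
def heartLexLt {a0 a1 b0 b1 : ℕ} (x y : Heart a0 a1 b0 b1) : Prop :=
  heartRank x < heartRank y ∨ (heartRank x = heartRank y ∧ x.1.2.val < y.1.2.val)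


/-! Record an element `(d - j, j)` of level `d` of the heart by its `y`-exponent `j`. Levels
become finite sets `L d ⊆ ℕ`, the upper shadow of `A ⊆ L d` becomes `(A ∪ (A + 1)) ∩ L (d + 1)`,
and initial segments become the upward closed subsets of `L d`. Since the heart is a lower set of
`ℕ²`, every `j ∈ L (d + 1)` lies in `L d` or has `j - 1 ∈ L d`, and this alone makes shadows of
initial segments initial. Under the hypotheses, `L d` is the interval `[0, d]`, or one or two
intervals each losing at most its first element in `L (d + 1)`. On each interval the shadow of a
top segment is computed exactly, and an arbitrary `A` injects into its shadow by shifting the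
elements below a hole of `A` up by one, which gives the matching lower bound. -/

def IsUpperIn (L T : Finset ℕ) : Prop := ∀ j ∈ T, ∀ j' ∈ L, j ≤ j' → j' ∈ T

def succShadow (L A : Finset ℕ) : Finset ℕ := (A ∪ A.image (· + 1)) ∩ L

section SuccShadow

variable {L L' A T : Finset ℕ}

theorem mem_succShadow {j : ℕ} :
    j ∈ succShadow L A ↔ (j ∈ A ∨ 0 < j ∧ j - 1 ∈ A) ∧ j ∈ L := by
  simp only [succShadow, mem_inter, mem_union, mem_image]
  constructor
  · rintro ⟨h | ⟨i, hi, rfl⟩, hL⟩ <;> simp_all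
  · rintro ⟨h | ⟨hj, hA⟩, hL⟩
    · exact ⟨.inl h, hL⟩
    · exact ⟨.inr ⟨j - 1, hA, by omega⟩, hL⟩

theorem IsUpperIn.eq_Ico {x y : ℕ} (hT : T ⊆ Ico x y) (hup : IsUpperIn (Ico x y) T) :
    T = Ico (y - #T) y := by
  rcases T.eq_empty_or_nonempty with rfl | hne
  · simp
  have hmin := mem_Ico.mp (hT (T.min'_mem hne))
  have heq : T = Ico (T.min' hne) y := by
    refine Subset.antisymm (fun t ht => mem_Ico.mpr ⟨T.min'_le t ht, (mem_Ico.mp (hT ht)).2⟩)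
      (fun j hj => ?_)
    rw [mem_Ico] at hj
    exact hup _ (T.min'_mem hne) j (mem_Ico.mpr (by omega)) hj.1
  conv_rhs => rw [heq, Nat.card_Ico, Nat.sub_sub_self hmin.2.le, ← heq]

theorem isUpperIn_succShadow (hT : T ⊆ L) (hup : IsUpperIn L T)
    (hL' : ∀ j ∈ L', j ∈ L ∨ 0 < j ∧ j - 1 ∈ L) : IsUpperIn L' (succShadow L' T) := by
  intro j hj j' hj' hjj'
  rw [mem_succShadow] at hj ⊢
  obtain ⟨t, ht, htj⟩ : ∃ t ∈ T, t ≤ j := by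
    rcases hj.1 with h | ⟨_, h⟩
    · exact ⟨j, h, le_rfl⟩
    · exact ⟨j - 1, h, by omega⟩
  refine ⟨?_, hj'⟩
  by_cases hj'L : j' ∈ L
  · exact .inl (hup t ht j' hj'L (by omega))
  · obtain ⟨hpos, h⟩ := (hL' j' hj').resolve_left hj'L
    have : t ≠ j' := fun h' => hj'L (h' ▸ hT ht)
    exact .inr ⟨hpos, hup t ht _ h (by omega)⟩

theorem card_add_one_le_card_union_image_succ (hA : A.Nonempty) :
    #A + 1 ≤ #(A ∪ A.image (· + 1)) := by
  have hnew : A.max' hA + 1 ∉ A := fun h => by have := A.le_max' _ h; omega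
  rw [← card_insert_of_notMem hnew]
  exact card_le_card (insert_subset (mem_union_right _ (mem_image_of_mem _ (A.max'_mem hA)))
    subset_union_left)

/-- If `A` misses some `c ∈ [l, e)`, shifting the elements of `A` below `c` up by one injects `A`
into its shadow. -/
theorem min_card_le_card_succShadow_Ico {l l' e : ℕ} (hA : A ⊆ Ico l e) (hl : l ≤ l')
    (hl' : l' ≤ l + 1) : min #A (e - l') ≤ #(succShadow (Ico l' e) A) := by
  by_cases hfull : Ico l e ⊆ A
  · have : Ico l' e ⊆ succShadow (Ico l' e) A := fun j hj => by
      rw [mem_Ico] at hj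
      exact mem_succShadow.mpr ⟨.inl (hfull (mem_Ico.mpr (by omega))), mem_Ico.mpr hj⟩
    have := card_le_card this
    simp only [Nat.card_Ico] at this
    omega
  obtain ⟨c, hc, hcA⟩ := not_subset.mp hfull
  rw [mem_Ico] at hc
  have hinj : Set.InjOn (fun j => if j < c then j + 1 else j) A := by
    intro x hx y hy hxy
    have : x ≠ c := fun h => hcA (h ▸ hx)
    have : y ≠ c := fun h => hcA (h ▸ hy)
    by_cases x < c <;> by_cases y < c <;> simp_all <;> omega
  have hmaps : ∀ j ∈ A, (if j < c then j + 1 else j) ∈ succShadow (Ico l' e) A := by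
    intro j hj
    have := mem_Ico.mp (hA hj)
    have : j ≠ c := fun h => hcA (h ▸ hj)
    rw [mem_succShadow, mem_Ico]
    split_ifs with hjc
    · exact ⟨.inr ⟨by omega, by simpa using hj⟩, by omega, by omega⟩
    · exact ⟨.inl hj, by omega, by omega⟩
  have := card_le_card_of_injOn _ hmaps hinj
  omega

theorem IsUpperIn.card_succShadow_Ico {l e : ℕ} (hT : T ⊆ Ico l e) (hup : IsUpperIn (Ico l e) T)
    (l' : ℕ) : #(succShadow (Ico l' e) T) = min #T (e - l') := by
  have hT' := hup.eq_Ico hT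
  set k := #T
  have : succShadow (Ico l' e) T = Ico (max (e - k) l') e := by
    ext j
    rw [hT', mem_succShadow]
    simp only [mem_Ico]
    omega
  rw [this, Nat.card_Ico]
  omega

theorem IsUpperIn.card_succShadow_le_of_Ico_succ {l e : ℕ} (hT : T ⊆ Ico l e)
    (hup : IsUpperIn (Ico l e) T) (hA : A ⊆ Ico l e) (hcard : #T = #A) :
    #(succShadow (Ico l (e + 1)) T) ≤ #(succShadow (Ico l (e + 1)) A) := by
  rcases A.eq_empty_or_nonempty with rfl | hne
  · rw [card_empty, card_eq_zero] at hcard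
    simp [hcard, succShadow]
  have hsub : ∀ B ⊆ Ico l e, succShadow (Ico l (e + 1)) B = B ∪ B.image (· + 1) := by
    intro B hB
    refine inter_eq_left.mpr fun j hj => ?_
    rcases mem_union.mp hj with h | h
    · have := mem_Ico.mp (hB h); exact mem_Ico.mpr (by omega)
    · obtain ⟨i, hi, rfl⟩ := mem_image.mp h
      have := mem_Ico.mp (hB hi); exact mem_Ico.mpr (by omega)
  have hT' := hup.eq_Ico hT
  have hTle := card_le_card hT
  have hk : 0 < #T := hcard ▸ hne.card_pos
  set k := #T
  rw [Nat.card_Ico] at hTle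
  have hTsh : T ∪ T.image (· + 1) = Ico (e - k) (e + 1) := by
    rw [hT', image_add_right_Ico]
    ext j
    simp only [mem_union, mem_Ico]
    omega
  rw [hsub T hT, hsub A hA, hTsh, Nat.card_Ico]
  have := card_add_one_le_card_union_image_succ hne
  omega

end SuccShadow

section TwoIntervals

variable {A B T : Finset ℕ} {l₁ l₁' e₁ l₂ e₂ : ℕ}

theorem IsUpperIn.inter {L L₀ : Finset ℕ} (hup : IsUpperIn L T) (hL₀ : L₀ ⊆ L) :
    IsUpperIn L₀ (T ∩ L₀) := fun j hj j' hj' hjj' =>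
  mem_inter.mpr ⟨hup j (mem_inter.mp hj).1 j' (hL₀ hj') hjj', hj'⟩

theorem card_eq_card_inter_add_card_inter (hB : B ⊆ Ico l₁ e₁ ∪ Ico l₂ e₂) (he : e₁ ≤ l₂) :
    #B = #(B ∩ Ico l₁ e₁) + #(B ∩ Ico l₂ e₂) := by
  rw [← card_union_of_disjoint, ← inter_union_distrib_left, inter_eq_left.mpr hB]
  exact disjoint_left.mpr fun j h₁ h₂ => by
    have := mem_Ico.mp (mem_inter.mp h₁).2
    have := mem_Ico.mp (mem_inter.mp h₂).2
    omega

theorem card_succShadow_Ico_union_Ico (hB : B ⊆ Ico l₁ e₁ ∪ Ico l₂ e₂) (he : e₁ ≤ l₂) :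
    #(succShadow (Ico l₁' e₁ ∪ Ico (l₂ + 1) e₂) B) =
      #(succShadow (Ico l₁' e₁) (B ∩ Ico l₁ e₁)) +
        #(succShadow (Ico (l₂ + 1) e₂) (B ∩ Ico l₂ e₂)) := by
  rw [← card_union_of_disjoint]
  · congr 1
    ext j
    have hj := @hB j
    have hj₁ := @hB (j - 1)
    simp only [mem_succShadow, mem_union, mem_inter, mem_Ico] at hj hj₁ ⊢
    by_cases j ∈ B <;> by_cases j - 1 ∈ B <;> simp_all <;> omega
  · refine disjoint_left.mpr fun j h₁ h₂ => ?_
    have := (mem_succShadow.mp h₁).2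
    have := (mem_succShadow.mp h₂).2
    simp only [mem_Ico] at *
    omega

/-- Without `hshrink`, a short lower interval losing its first element could hold a set whose
shadow is smaller than that of the top segment of the same size. -/
theorem IsUpperIn.card_succShadow_le_of_Ico_union_Ico
    (hT : T ⊆ Ico l₁ e₁ ∪ Ico l₂ e₂) (hup : IsUpperIn (Ico l₁ e₁ ∪ Ico l₂ e₂) T)
    (hA : A ⊆ Ico l₁ e₁ ∪ Ico l₂ e₂) (hcard : #T = #A) (he : e₁ ≤ l₂) (hl : l₁ ≤ l₁')
    (hl' : l₁' ≤ l₁ + 1) (hshrink : l₁' = l₁ ∨ e₂ - l₂ ≤ e₁ - l₁) :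
    #(succShadow (Ico l₁' e₁ ∪ Ico (l₂ + 1) e₂) T) ≤
      #(succShadow (Ico l₁' e₁ ∪ Ico (l₂ + 1) e₂) A) := by
  rw [card_succShadow_Ico_union_Ico hT he, card_succShadow_Ico_union_Ico hA he,
    (hup.inter subset_union_left).card_succShadow_Ico inter_subset_right,
    (hup.inter subset_union_right).card_succShadow_Ico inter_subset_right]
  have hfull : #(T ∩ Ico l₁ e₁) = 0 ∨ #(T ∩ Ico l₂ e₂) = e₂ - l₂ := by
    rcases (T ∩ Ico l₁ e₁).eq_empty_or_nonempty with h | ⟨t, ht⟩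
    · exact .inl (card_eq_zero.mpr h)
    refine .inr ?_
    have htI := mem_Ico.mp (mem_inter.mp ht).2
    have hsub : Ico l₂ e₂ ⊆ T ∩ Ico l₂ e₂ := fun j hj =>
      mem_inter.mpr ⟨hup t (mem_inter.mp ht).1 j (mem_union_right _ hj)
        (by have := mem_Ico.mp hj; omega), hj⟩
    have := card_le_card hsub
    have := card_le_card (inter_subset_right (s₁ := T) (s₂ := Ico l₂ e₂))
    simp only [Nat.card_Ico] at *
    omega
  have hT₁ := card_le_card (inter_subset_right (s₁ := T) (s₂ := Ico l₁ e₁))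
  have hA₁ := card_le_card (inter_subset_right (s₁ := A) (s₂ := Ico l₁ e₁))
  have hA₂ := card_le_card (inter_subset_right (s₁ := A) (s₂ := Ico l₂ e₂))
  have hAsh₁ := min_card_le_card_succShadow_Ico
    (inter_subset_right (s₁ := A) (s₂ := Ico l₁ e₁)) hl hl'
  have hAsh₂ := min_card_le_card_succShadow_Ico
    (inter_subset_right (s₁ := A) (s₂ := Ico l₂ e₂)) (Nat.le_add_right l₂ 1) le_rfl
  rw [card_eq_card_inter_add_card_inter hT he, card_eq_card_inter_add_card_inter hA he] at hcard
  simp only [Nat.card_Ico] at *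
  omega

end TwoIntervals

/-- Level `d` of the heart, encoded by the `y`-exponents `j` of its elements `(d - j, j)`. -/
def heartLevel (a0 a1 b0 b1 d : ℕ) : Finset ℕ :=
  (range (d + 1)).filter fun j => (d - j < a0 ∧ j < a1) ∨ (d - j < b0 ∧ j < b1)

section HeartLevel

variable {a0 a1 b0 b1 d j : ℕ}

theorem mem_heartLevel :
    j ∈ heartLevel a0 a1 b0 b1 d ↔
      j ≤ d ∧ ((d - j < a0 ∧ j < a1) ∨ (d - j < b0 ∧ j < b1)) := by
  simp [heartLevel]

theorem mem_or_pred_mem_heartLevel_of_mem_heartLevel_succ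
    (hj : j ∈ heartLevel a0 a1 b0 b1 (d + 1)) :
    j ∈ heartLevel a0 a1 b0 b1 d ∨ 0 < j ∧ j - 1 ∈ heartLevel a0 a1 b0 b1 d := by
  simp only [mem_heartLevel] at *
  omega

theorem heartLevel_eq_Ico_zero (h3 : b1 ≤ a0) (h5 : b1 < a1 + b0) (hd : d < b1) :
    heartLevel a0 a1 b0 b1 d = Ico 0 (d + 1) := by
  ext j
  rw [mem_heartLevel, mem_Ico]
  omega

theorem heartLevel_eq_Ico (h1 : b0 < a0) (h2 : a1 < b1) (hd : b1 ≤ d + 1)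
    (hd' : d + 1 ≤ a1 + b0) : heartLevel a0 a1 b0 b1 d = Ico (d + 1 - a0) b1 := by
  ext j
  rw [mem_heartLevel, mem_Ico]
  omega

theorem heartLevel_eq_Ico_union_Ico (h5 : b1 < a1 + b0)
    (hd : a1 + b0 ≤ d + 1) :
    heartLevel a0 a1 b0 b1 d = Ico (d + 1 - a0) a1 ∪ Ico (d + 1 - b0) b1 := by
  ext j
  rw [mem_heartLevel, mem_union, mem_Ico, mem_Ico]
  omega

/-- The levels are `[0, d]` below `b1`, then a single interval losing its first element at each
step up to `a1 + b0`, and two such intervals from there on. -/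
theorem IsUpperIn.card_succShadow_heartLevel_le {A T : Finset ℕ}
    (h1 : b0 < a0) (h2 : a1 < b1) (h3 : b1 ≤ a0) (h4 : b0 + b1 ≤ a0 + a1) (h5 : b1 < a1 + b0)
    (hT : T ⊆ heartLevel a0 a1 b0 b1 d) (hup : IsUpperIn (heartLevel a0 a1 b0 b1 d) T)
    (hA : A ⊆ heartLevel a0 a1 b0 b1 d) (hcard : #T = #A) :
    #(succShadow (heartLevel a0 a1 b0 b1 (d + 1)) T) ≤
      #(succShadow (heartLevel a0 a1 b0 b1 (d + 1)) A) := by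
  rcases lt_or_ge (d + 1) b1 with hd | hd
  · rw [heartLevel_eq_Ico_zero h3 h5 hd]
    rw [heartLevel_eq_Ico_zero h3 h5 (by omega)] at hT hup hA
    exact hup.card_succShadow_le_of_Ico_succ hT hA hcard
  rcases lt_or_ge (d + 1) (a1 + b0) with hd' | hd'
  · rw [heartLevel_eq_Ico h1 h2 (by omega) (by omega)] at hT hup hA ⊢
    rw [hup.card_succShadow_Ico hT, hcard]
    exact min_card_le_card_succShadow_Ico hA (by omega) (by omega)
  · rw [heartLevel_eq_Ico_union_Ico h5 (by omega), show d + 1 + 1 - b0 = d + 1 - b0 + 1 by omega]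
    rw [heartLevel_eq_Ico_union_Ico h5 hd'] at hT hup hA
    exact hup.card_succShadow_le_of_Ico_union_Ico hT hA hcard (by omega) (by omega) (by omega)
      (by omega)

end HeartLevel

namespace Heart

variable {a0 a1 b0 b1 d : ℕ}

def x (p : Heart a0 a1 b0 b1) : ℕ := p.1.1.val

def y (p : Heart a0 a1 b0 b1) : ℕ := p.1.2.val

theorem heartRank_eq (p : Heart a0 a1 b0 b1) : heartRank p = x p + y p := rfl

def toProd : Heart a0 a1 b0 b1 ↪o ℕ × ℕ :=
  OrderEmbedding.ofMapLEIff (fun p => (x p, y p)) fun _ _ => Iff.rfl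

theorem toProd_apply (p : Heart a0 a1 b0 b1) : toProd p = (x p, y p) := rfl

theorem range_toProd :
    Set.range (toProd (a0 := a0) (a1 := a1) (b0 := b0) (b1 := b1)) =
      {q | (q.1 < a0 ∧ q.2 < a1) ∨ (q.1 < b0 ∧ q.2 < b1)} := by
  ext q
  constructor
  · rintro ⟨p, rfl⟩
    exact p.2
  · intro (hq : (q.1 < a0 ∧ q.2 < a1) ∨ (q.1 < b0 ∧ q.2 < b1))
    exact ⟨⟨(⟨q.1, by omega⟩, ⟨q.2, by omega⟩), hq⟩, rfl⟩

/-- The heart is a lower set of `ℕ × ℕ`, so it inherits the covering relation of `ℕ × ℕ`. -/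
theorem covBy_iff {p q : Heart a0 a1 b0 b1} :
    p ⋖ q ↔ (x q = x p + 1 ∧ y q = y p) ∨ (y q = y p + 1 ∧ x q = x p) := by
  have hconn : (Set.range (toProd (a0 := a0) (a1 := a1) (b0 := b0) (b1 := b1))).OrdConnected := by
    rw [range_toProd]
    refine IsLowerSet.ordConnected
      fun a b hba (ha : (a.1 < a0 ∧ a.2 < a1) ∨ (a.1 < b0 ∧ a.2 < b1)) => ?_
    show (b.1 < a0 ∧ b.2 < a1) ∨ (b.1 < b0 ∧ b.2 < b1)
    have := Prod.le_def.mp hba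
    omega
  rw [← hconn.apply_covBy_apply_iff toProd, toProd_apply, toProd_apply, Prod.covBy_iff,
    Nat.covBy_iff_add_one_eq, Nat.covBy_iff_add_one_eq]
  omega

theorem eq_of_heartRank_eq_of_y_eq {p q : Heart a0 a1 b0 b1} (hr : heartRank p = heartRank q)
    (hy : y p = y q) : p = q := by
  rw [heartRank_eq, heartRank_eq, hy] at hr
  exact Subtype.ext (Prod.ext (Fin.ext (Nat.add_right_cancel hr)) (Fin.ext hy))

theorem y_mem_heartLevel {p : Heart a0 a1 b0 b1} (hp : heartRank p = d) :
    y p ∈ heartLevel a0 a1 b0 b1 d := by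
  have : (x p < a0 ∧ y p < a1) ∨ (x p < b0 ∧ y p < b1) := p.2
  rw [heartRank_eq] at hp
  rw [mem_heartLevel]
  omega

theorem exists_of_mem_heartLevel {j : ℕ} (hj : j ∈ heartLevel a0 a1 b0 b1 d) :
    ∃ p : Heart a0 a1 b0 b1, heartRank p = d ∧ y p = j := by
  rw [mem_heartLevel] at hj
  refine ⟨⟨(⟨d - j, by omega⟩, ⟨j, by omega⟩), hj.2⟩, ?_, rfl⟩
  simp only [heartRank_eq, x, y]
  omega

theorem mem_shadow_iff {A : Finset (Heart a0 a1 b0 b1)} {b : Heart a0 a1 b0 b1} :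
    b ∈ shadow A ↔ ∃ a ∈ A, a ⋖ b := by
  simp only [_root_.shadow, mem_filter, mem_univ, true_and]

theorem heartLexLt_eq : (heartLexLt : Heart a0 a1 b0 b1 → Heart a0 a1 b0 b1 → Prop) =
    InvImage (· < ·) fun p => toLex ((heartRank p, y p) : ℕ × ℕ) := by
  ext p q
  exact (Prod.Lex.toLex_lt_toLex (x := (heartRank p, y p)) (y := (heartRank q, y q))).symm

instance : IsStrictTotalOrder (Heart a0 a1 b0 b1) heartLexLt where
  trichotomous := by
    rw [heartLexLt_eq]
    refine (InvImage.trichotomous fun p q h => ?_).trichotomous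
    exact eq_of_heartRank_eq_of_y_eq (congrArg (·.1) h) (congrArg (·.2) h)
  irrefl := by
    rw [heartLexLt_eq]
    exact fun _ => lt_irrefl _
  trans := by
    rw [heartLexLt_eq]
    exact fun _ _ _ => lt_trans

section Level

variable {A S : Finset (Heart a0 a1 b0 b1)}

theorem card_image_y (hA : ∀ p ∈ A, heartRank p = d) : #(A.image y) = #A :=
  card_image_of_injOn fun p hp q hq => eq_of_heartRank_eq_of_y_eq (by rw [hA p hp, hA q hq])

theorem image_y_subset_heartLevel (hA : ∀ p ∈ A, heartRank p = d) :
    A.image y ⊆ heartLevel a0 a1 b0 b1 d := by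
  intro j hj
  obtain ⟨p, hp, rfl⟩ := mem_image.mp hj
  exact y_mem_heartLevel (hA p hp)

theorem heartRank_of_mem_shadow (hA : ∀ p ∈ A, heartRank p = d) {b : Heart a0 a1 b0 b1}
    (hb : b ∈ shadow A) : heartRank b = d + 1 := by
  obtain ⟨a, ha, hab⟩ := mem_shadow_iff.mp hb
  have := hA a ha
  rw [covBy_iff] at hab
  rw [heartRank_eq] at *
  omega

theorem image_y_shadow (hA : ∀ p ∈ A, heartRank p = d) :
    (shadow A).image y = succShadow (heartLevel a0 a1 b0 b1 (d + 1)) (A.image y) := by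
  ext j
  rw [mem_succShadow]
  constructor
  · intro hj
    obtain ⟨b, hb, rfl⟩ := mem_image.mp hj
    refine ⟨?_, y_mem_heartLevel (heartRank_of_mem_shadow hA hb)⟩
    obtain ⟨a, ha, hab⟩ := mem_shadow_iff.mp hb
    rcases covBy_iff.mp hab with ⟨-, h⟩ | ⟨h, -⟩
    · exact .inl (mem_image.mpr ⟨a, ha, h.symm⟩)
    · exact .inr ⟨by omega, mem_image.mpr ⟨a, ha, by omega⟩⟩
  · rintro ⟨hjA, hj⟩
    obtain ⟨b, hb, rfl⟩ := exists_of_mem_heartLevel hj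
    refine mem_image.mpr ⟨b, mem_shadow_iff.mpr ?_, rfl⟩
    rcases hjA with h | ⟨-, h⟩ <;> obtain ⟨a, ha, hay⟩ := mem_image.mp h <;>
      refine ⟨a, ha, covBy_iff.mpr ?_⟩ <;> have := hA a ha <;> rw [heartRank_eq] at * <;> omega

theorem isInitSeg_iff (hS : ∀ p ∈ S, heartRank p = d) :
    IsInitSeg heartRank heartLexLt d S ↔ IsUpperIn (heartLevel a0 a1 b0 b1 d) (S.image y) := by
  constructor
  · rintro ⟨-, hup⟩ j hj j' hj' hjj'
    obtain ⟨p, hp, rfl⟩ := mem_image.mp hj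
    obtain ⟨q, hq, rfl⟩ := exists_of_mem_heartLevel hj'
    rcases hjj'.eq_or_lt with h | h
    · exact h ▸ hj
    · exact mem_image_of_mem y (hup p hp q hq (.inr ⟨by rw [hS p hp, hq], h⟩))
  · refine fun hup => ⟨hS, fun p hp q hq hpq => ?_⟩
    have hy : y p < y q := by
      rcases hpq with h | ⟨-, h⟩
      · rw [hS p hp, hq] at h
        exact absurd h (lt_irrefl d)
      · exact h
    obtain ⟨q', hq', hy'⟩ := mem_image.mp
      (hup (y p) (mem_image_of_mem y hp) (y q) (y_mem_heartLevel hq) hy.le)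
    rwa [← eq_of_heartRank_eq_of_y_eq (by rw [hS q' hq', hq]) hy']

theorem isInitSeg_shadow (hS : IsInitSeg heartRank heartLexLt d S) :
    IsInitSeg heartRank heartLexLt (d + 1) (shadow S) := by
  rw [isInitSeg_iff fun _ => heartRank_of_mem_shadow hS.1, image_y_shadow hS.1]
  exact isUpperIn_succShadow (image_y_subset_heartLevel hS.1) ((isInitSeg_iff hS.1).1 hS)
    fun _ => mem_or_pred_mem_heartLevel_of_mem_heartLevel_succ

theorem card_shadow_le_of_isInitSeg (h1 : b0 < a0) (h2 : a1 < b1) (h3 : b1 ≤ a0)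
    (h4 : b0 + b1 ≤ a0 + a1) (h5 : b1 < a1 + b0)
    (hA : ∀ p ∈ A, heartRank p = d) (hS : IsInitSeg heartRank heartLexLt d S)
    (hcard : #S = #A) : #(shadow S) ≤ #(shadow A) := by
  rw [← card_image_y fun _ => heartRank_of_mem_shadow hS.1,
    ← card_image_y fun _ => heartRank_of_mem_shadow hA, image_y_shadow hS.1, image_y_shadow hA]
  exact ((isInitSeg_iff hS.1).1 hS).card_succShadow_heartLevel_le h1 h2 h3 h4 h5
    (image_y_subset_heartLevel hS.1) (image_y_subset_heartLevel hA)
    (by rw [card_image_y hS.1, card_image_y hA, hcard])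

end Level

end Heart

/-- In the case b0 < a0, a1 < b1, a0 ≥ b1, a0 + a1 ≥ b0 + b1 and a1 + b0 > b1, the
heart-shaped poset is Macaulay with respect to the lexicographic order with y > x. -/
theorem stmt16 (a0 a1 b0 b1 : ℕ) (h1 : b0 < a0) (h2 : a1 < b1) (h3 : b1 ≤ a0)
    (h4 : b0 + b1 ≤ a0 + a1) (h5 : b1 < a1 + b0) :
    MacaulayWith (heartRank (a0 := a0) (a1 := a1) (b0 := b0) (b1 := b1))
      heartLexLt :=
  ⟨inferInstance, inferInstance, inferInstance,
    fun _ _ _ hA hS hcard => Heart.card_shadow_le_of_isInitSeg h1 h2 h3 h4 h5 hA hS hcard,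
    fun _ _ => Heart.isInitSeg_shadow⟩
end

section
/- Let P be the monomial poset of K[y,z]/(y^3, y^2 z, y z^2, z^3) (the poset {(0,0),(1,0),(0,1),(2,0),(1,1),(0,2)} under componentwise order) and let Q be the chain {0,1}. Then the cartesian product P x Q is not a Macaulay poset. -/
open Finset

variable {α : Type*}

/-!
Write `y, z` for the variables of `P` and `t` for the generator of `Q`. In a Macaulay order the
largest element of a level is an initial segment by itself, so its upper shadow is no larger
than that of any other element of the level. In level 1 only `t` has a shadow of size at most 2
(`y` and `z` have 3), so `t` tops level 1; as its shadow `{y t, z t}` is again an initial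
segment, the top of level 2 is `y t` or `z t`. Both have shadow of size 2, whereas `y²` is
covered only by `y² t`.
-/

lemma mem_shadow_iff_exists_covBy [PartialOrder α] [Fintype α] {A : Finset α} {b : α} :
    b ∈ _root_.shadow A ↔ ∃ a ∈ A, a ⋖ b := by
  classical
  simp [_root_.shadow]

lemma shadow_singleton_eq_filter_covBy [PartialOrder α] [Fintype α]
    [DecidableRel (α := α) (· ⋖ ·)] (a : α) :
    _root_.shadow {a} = univ.filter (a ⋖ ·) := by
  ext b
  simp [mem_shadow_iff_exists_covBy]

def IsLevelTop (rank : α → ℕ) (lt : α → α → Prop) (d : ℕ) (m : α) : Prop :=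
  rank m = d ∧ ∀ b, rank b = d → b ≠ m → lt b m

lemma exists_isLevelTop [Finite α] {rank : α → ℕ} {lt : α → α → Prop}
    [Std.Trichotomous lt] [IsTrans α lt] [Std.Irrefl lt] {d : ℕ} (hd : ∃ x, rank x = d) :
    ∃ m, IsLevelTop rank lt d m := by
  obtain ⟨m, hm, hmax⟩ :=
    (Finite.wellFounded_of_trans_of_irrefl (Function.swap lt)).has_min {x | rank x = d} hd
  refine ⟨m, hm, fun b hb hbm => ?_⟩
  rcases trichotomous_of lt b m with hlt | heq | hgt
  · exact hlt
  · exact absurd heq hbm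
  · exact absurd hgt (hmax b hb)

lemma IsLevelTop.isInitSeg_singleton [PartialOrder α] {rank : α → ℕ} {lt : α → α → Prop}
    [IsTrans α lt] [Std.Irrefl lt] {d : ℕ} {m : α} (hm : IsLevelTop rank lt d m) :
    IsInitSeg rank lt d {m} := by
  refine ⟨by simpa using hm.1, fun a ha b hb hab => ?_⟩
  rw [mem_singleton] at ha ⊢
  subst ha
  by_contra hbm
  exact irrefl_of lt a (_root_.trans_of lt hab (hm.2 b hb hbm))

namespace MacaulayWith

variable [PartialOrder α] [Fintype α] {rank : α → ℕ} {lt : α → α → Prop} {d : ℕ}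
  {m : α}

lemma exists_isLevelTop (h : MacaulayWith rank lt) (hd : ∃ x, rank x = d) :
    ∃ m, IsLevelTop rank lt d m := by
  obtain ⟨htri, htrans, hirr, -⟩ := h
  exact _root_.exists_isLevelTop hd

lemma card_shadow_top_le (h : MacaulayWith rank lt) (hm : IsLevelTop rank lt d m) {a : α}
    (ha : rank a = d) : #(_root_.shadow {m}) ≤ #(_root_.shadow {a}) := by
  obtain ⟨-, htrans, hirr, hmin, -⟩ := h
  exact hmin d {a} {m} (by simpa using ha) hm.isInitSeg_singleton rfl

lemma top_mem_shadow_top (h : MacaulayWith rank lt) (hm : IsLevelTop rank lt d m) {m' : α}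
    (hm' : IsLevelTop rank lt (d + 1) m') (hne : (_root_.shadow {m}).Nonempty) :
    m' ∈ _root_.shadow {m} := by
  obtain ⟨-, htrans, hirr, -, hshad⟩ := h
  obtain ⟨x, hx⟩ := hne
  obtain rfl | hxm' := eq_or_ne x m'
  · exact hx
  · have hseg := hshad d {m} hm.isInitSeg_singleton
    exact hseg.2 x hx m' hm'.1 (hm'.2 x (hseg.1 x hx) hxm')

end MacaulayWith

namespace Counterexample

/-- The monomials of degree at most 2 in two variables, ordered by divisibility. -/
abbrev QuadMonomials := {p : Fin 3 × Fin 3 // p.1.val + p.2.val ≤ 2}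

instance : DecidableLT (QuadMonomials × Fin 2) := decidableLTOfDecidableLE

instance : DecidableRel (α := QuadMonomials × Fin 2) (· ⋖ ·) := fun a b =>
  decidable_of_iff (a < b ∧ ∀ c, a < c → ¬ c < b) Iff.rfl

def degree (x : QuadMonomials × Fin 2) : ℕ := x.1.1.1.val + x.1.1.2.val + x.2.val

def t : QuadMonomials × Fin 2 := (⟨(0, 0), by decide⟩, 1)

def ySq : QuadMonomials × Fin 2 := (⟨(2, 0), by decide⟩, 0)

lemma eq_t_of_degree_eq_one : ∀ m, degree m = 1 →
    #(univ.filter (m ⋖ ·)) ≤ #(univ.filter (t ⋖ ·)) → m = t := by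
  decide

lemma card_covers_eq_two_of_t_covBy : ∀ x, t ⋖ x → #(univ.filter (x ⋖ ·)) = 2 := by
  decide

lemma card_covers_ySq : #(univ.filter (ySq ⋖ ·)) = 1 := by
  decide

lemma exists_t_covBy : ∃ x, t ⋖ x := by
  decide

end Counterexample

/-- The product of the monomial poset of K[y,z]/(y,z)^3 with the chain {0,1} is not
Macaulay. -/
theorem stmt19 :
    ¬ IsMacaulay (fun x : {p : Fin 3 × Fin 3 // p.1.val + p.2.val ≤ 2} × Fin 2 =>
        x.1.1.1.val + x.1.1.2.val + x.2.val) := by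
  open Counterexample in
  rintro ⟨lt, h⟩
  obtain ⟨m₁, hm₁⟩ := h.exists_isLevelTop (d := 1) ⟨t, rfl⟩
  have hm₁t : m₁ = t := by
    refine eq_t_of_degree_eq_one m₁ hm₁.1 ?_
    simpa only [shadow_singleton_eq_filter_covBy] using h.card_shadow_top_le hm₁ (a := t) rfl
  subst hm₁t
  obtain ⟨m₂, hm₂⟩ := h.exists_isLevelTop (d := 2) ⟨ySq, rfl⟩
  have ht_covBy : t ⋖ m₂ := by
    obtain ⟨x, hx⟩ := exists_t_covBy
    have hne : (_root_.shadow {t}).Nonempty :=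
      ⟨x, mem_shadow_iff_exists_covBy.2 ⟨t, mem_singleton_self t, hx⟩⟩
    simpa [mem_shadow_iff_exists_covBy] using h.top_mem_shadow_top hm₁ hm₂ hne
  have hle := h.card_shadow_top_le hm₂ (a := ySq) rfl
  rw [shadow_singleton_eq_filter_covBy, shadow_singleton_eq_filter_covBy,
    card_covers_eq_two_of_t_covBy m₂ ht_covBy, card_covers_ySq] at hle
  omega
end
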